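/- There exists θ₀ ∈ (π/2, π) such that for every θ ∈ (π/2, θ₀) there are constants c₁, c₂ > 0, independent of τ and z, with the property: for every time step τ > 0 and every z ∈ D(τ,θ) one has c₁|z| ≤ |δ_τ(e^{−zτ})| ≤ c₂|z|, where δ_τ is the BDF3 generating symbol. -/

import Mathlib

open Complex Set

/-- The BDF3 generating symbol `δ_τ(ξ) = τ⁻¹(11/6 − 3ξ + (3/2)ξ² − (1/3)ξ³)`. -/
noncomputable def bdf3 (τ : ℝ) (ξ : ℂ) : ℂ :=
  (τ : ℂ)⁻¹ * (11 / 6 - 3 * ξ + (3 / 2) * ξ ^ 2 - (1 / 3) * ξ ^ 3)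

/-- The region `D(τ,θ)`: nonzero `z` with either `|arg z| = θ` and `|Im z| ≤ π/τ`,
or `|z| ≤ 1/τ` and `|arg z| ≤ θ`. -/
def Dset (τ θ : ℝ) : Set ℂ :=
  {z : ℂ | z ≠ 0 ∧
    ((|z.arg| = θ ∧ |z.im| ≤ Real.pi / τ) ∨ (‖z‖ ≤ 1 / τ ∧ |z.arg| ≤ θ))}

/-!
Rescaling by `w = zτ` gives `δ_τ(e^{-zτ}) = τ⁻¹ f(w)` with `f(w) = δ₁(e^{-w})`, so it suffices to
bound `|f(w)/w|` above and below on the rescaled region. Since `f(0) = 0` and `f'(0) = 1`, the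
quotient `f(w)/w` extends continuously by `1` at `0`. Its other zeros come from `e^{-w} = 1`, i.e.
`w ∈ 2πiℤ`, or from the roots of `2ξ² − 7ξ + 11`, which have `|ξ|² = 11/2 > e`, i.e. `Re w < −1/2`.
For `cos θ ≥ −1/8` the rescaled region lies in the compact set `|w| ≤ 4`, `Re w ≥ −1/2`,
`|Im w| ≤ π`, on which `f(w)/w` therefore has no zero; compactness gives the two constants.
-/

theorem IsCompact.exists_pos_bounds_norm {X E : Type*} [TopologicalSpace X] [NormedAddCommGroup E]
    {K : Set X} (hK : IsCompact K) {g : X → E} (hg : ContinuousOn g K)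
    (hg0 : ∀ x ∈ K, g x ≠ 0) :
    ∃ c₁ > (0 : ℝ), ∃ c₂ > (0 : ℝ), ∀ x ∈ K, c₁ ≤ ‖g x‖ ∧ ‖g x‖ ≤ c₂ := by
  rcases K.eq_empty_or_nonempty with rfl | hne
  · exact ⟨1, one_pos, 1, one_pos, by simp⟩
  obtain ⟨x₁, hx₁, hmin⟩ := hK.exists_isMinOn hne hg.norm
  obtain ⟨x₂, hx₂, hmax⟩ := hK.exists_isMaxOn hne hg.norm
  exact ⟨‖g x₁‖, norm_pos_iff.2 (hg0 x₁ hx₁), ‖g x₂‖, norm_pos_iff.2 (hg0 x₂ hx₂),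
    fun x hx => ⟨hmin hx, hmax hx⟩⟩

lemma bdf3_eq_inv_mul_bdf3_one (τ : ℝ) (ξ : ℂ) : bdf3 τ ξ = (τ : ℂ)⁻¹ * bdf3 1 ξ := by
  simp [bdf3]

lemma bdf3_one_eq : bdf3 1 = fun ξ => 11 / 6 - 3 * ξ + (3 / 2) * ξ ^ 2 - (1 / 3) * ξ ^ 3 := by
  ext ξ; simp [bdf3]

lemma bdf3_one_eq_mul (ξ : ℂ) :
    bdf3 1 ξ = -(1 / 6) * (ξ - 1) * (2 * ξ ^ 2 - 7 * ξ + 11) := by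
  rw [bdf3_one_eq]; ring

lemma hasDerivAt_bdf3_one (ξ : ℂ) : HasDerivAt (bdf3 1) (-3 + 3 * ξ - ξ ^ 2) ξ := by
  rw [bdf3_one_eq]
  refine (((((hasDerivAt_id ξ).const_mul 3).const_sub (11 / 6)).add
    ((hasDerivAt_pow 2 ξ).const_mul (3 / 2))).sub
    ((hasDerivAt_pow 3 ξ).const_mul (1 / 3))).congr_deriv ?_
  push_cast; ring

noncomputable def bdf3Exp (w : ℂ) : ℂ := bdf3 1 (exp (-w))

lemma continuous_bdf3Exp : Continuous bdf3Exp := by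
  unfold bdf3Exp bdf3; fun_prop

lemma bdf3Exp_zero : bdf3Exp 0 = 0 := by
  simp [bdf3Exp, bdf3_one_eq_mul]

lemma hasDerivAt_bdf3Exp_zero : HasDerivAt bdf3Exp 1 0 := by
  have h := (hasDerivAt_bdf3_one (exp (-0))).comp (0 : ℂ) (hasDerivAt_neg (0 : ℂ)).cexp
  norm_num at h
  exact h

lemma norm_sq_eq_of_quadratic_root {ξ : ℂ} (h : 2 * ξ ^ 2 - 7 * ξ + 11 = 0) :
    ‖ξ‖ ^ 2 = 11 / 2 := by
  have hre := congrArg Complex.re h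
  have him := congrArg Complex.im h
  simp only [pow_two, Complex.add_re, Complex.sub_re, Complex.mul_re, Complex.add_im,
    Complex.sub_im, Complex.mul_im] at hre him
  norm_num at hre him
  rw [Complex.sq_norm, Complex.normSq_apply]
  rcases mul_eq_zero.1 (show ξ.im * (4 * ξ.re - 7) = 0 by linarith) with h0 | h0
  · nlinarith
  · have : ξ.re = 7 / 4 := by linarith
    nlinarith

lemma eq_zero_of_exp_eq_one_of_abs_im_le {w : ℂ} (h : exp w = 1) (him : |w.im| ≤ Real.pi) :
    w = 0 := by
  obtain ⟨n, rfl⟩ := exp_eq_one_iff.1 h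
  have hn : |(n : ℝ)| * (2 * Real.pi) ≤ Real.pi := by
    simpa [abs_mul, abs_of_pos Real.pi_pos] using him
  have hn1 : ((|n| : ℤ) : ℝ) < 1 := by rw [Int.cast_abs]; nlinarith [Real.pi_pos]
  rw [← Int.cast_one, Int.cast_lt, Int.abs_lt_one_iff] at hn1
  simp [hn1]

lemma bdf3Exp_ne_zero {w : ℂ} (hw : w ≠ 0) (hre : -(1 / 2) ≤ w.re) (him : |w.im| ≤ Real.pi) :
    bdf3Exp w ≠ 0 := by
  rw [bdf3Exp, bdf3_one_eq_mul]
  refine mul_ne_zero (mul_ne_zero (by norm_num) fun h => hw ?_) fun h => ?_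
  · exact neg_eq_zero.1 (eq_zero_of_exp_eq_one_of_abs_im_le (sub_eq_zero.1 h) (by simpa using him))
  · have hsq := norm_sq_eq_of_quadratic_root h
    rw [norm_exp, neg_re, ← Real.exp_nat_mul] at hsq
    have : Real.exp (2 * -w.re) ≤ Real.exp 1 := Real.exp_le_exp.2 (by linarith)
    push_cast at hsq
    linarith [Real.exp_one_lt_d9]

lemma norm_bdf3_exp_neg_mul {τ : ℝ} (hτ : 0 < τ) (z : ℂ) :
    ‖bdf3 τ (exp (-z * τ))‖ = ‖dslope bdf3Exp 0 (z * τ)‖ * ‖z‖ := by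
  have h := sub_smul_dslope bdf3Exp 0 (z * τ)
  rw [bdf3Exp_zero, sub_zero, sub_zero, smul_eq_mul] at h
  rw [bdf3_eq_inv_mul_bdf3_one, neg_mul, ← bdf3Exp, ← h, norm_mul, norm_mul, norm_mul, norm_inv,
    norm_real, Real.norm_of_nonneg hτ.le]
  field_simp

def rescaledRegion : Set ℂ := {w | ‖w‖ ≤ 4 ∧ -(1 / 2) ≤ w.re ∧ |w.im| ≤ Real.pi}

lemma isCompact_rescaledRegion : IsCompact rescaledRegion :=
  (isCompact_closedBall (0 : ℂ) 4).of_isClosed_subset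
    ((isClosed_le continuous_norm continuous_const).inter
      ((isClosed_le continuous_const continuous_re).inter
        (isClosed_le continuous_im.abs continuous_const)))
    fun w hw => by simpa using hw.1

lemma continuous_dslope_bdf3Exp : Continuous (dslope bdf3Exp 0) :=
  continuousOn_univ.1 <| (continuousOn_dslope Filter.univ_mem).2
    ⟨continuous_bdf3Exp.continuousOn, hasDerivAt_bdf3Exp_zero.differentiableAt⟩

lemma dslope_bdf3Exp_ne_zero {w : ℂ} (hw : w ∈ rescaledRegion) : dslope bdf3Exp 0 w ≠ 0 := by
  rcases eq_or_ne w 0 with rfl | hw0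
  · rw [dslope_same, hasDerivAt_bdf3Exp_zero.deriv]
    exact one_ne_zero
  · rw [dslope_of_ne _ hw0, slope_def_field, bdf3Exp_zero, sub_zero, sub_zero]
    exact div_ne_zero (bdf3Exp_ne_zero hw0 hw.2.1 hw.2.2) hw0

lemma mul_ofReal_mem_Dset_one {τ θ : ℝ} (hτ : 0 < τ) {z : ℂ} (hz : z ∈ Dset τ θ) :
    z * τ ∈ Dset 1 θ := by
  obtain ⟨hz0, h⟩ := hz
  refine ⟨mul_ne_zero hz0 (ofReal_ne_zero.2 hτ.ne'), ?_⟩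
  rw [arg_mul_real hτ, im_mul_ofReal, norm_mul, norm_real, Real.norm_of_nonneg hτ.le, abs_mul,
    abs_of_pos hτ, div_one, div_one]
  rcases h with ⟨harg, him⟩ | ⟨hnorm, harg⟩
  · exact Or.inl ⟨harg, (le_div_iff₀ hτ).1 him⟩
  · exact Or.inr ⟨(le_div_iff₀ hτ).1 hnorm, harg⟩

lemma re_eq_norm_mul_cos_abs_arg (w : ℂ) : w.re = ‖w‖ * Real.cos |arg w| := by
  rw [Real.cos_abs, norm_mul_cos_arg]

lemma abs_im_eq_norm_mul_sin_abs_arg (w : ℂ) : |w.im| = ‖w‖ * Real.sin |arg w| := by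
  rw [← Real.abs_sin_eq_sin_abs_of_abs_le_pi (abs_arg_le_pi w), ← abs_norm, ← abs_mul,
    norm_mul_sin_arg]

lemma mem_rescaledRegion_of_mem_Dset_one {θ : ℝ} (hθ : Real.pi / 2 ≤ θ) (hθπ : θ ≤ Real.pi)
    (hcos : -(1 / 8) ≤ Real.cos θ) {w : ℂ} (hw : w ∈ Dset 1 θ) : w ∈ rescaledRegion := by
  obtain ⟨-, h⟩ := hw
  rw [div_one, div_one] at h
  have hcos_arg : Real.cos θ ≤ Real.cos |arg w| := by
    refine Real.cos_le_cos_of_nonneg_of_le_pi (abs_nonneg _) hθπ ?_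
    rcases h with ⟨harg, -⟩ | ⟨-, harg⟩ <;> linarith
  have hπ := Real.pi_lt_d2
  have hnorm : ‖w‖ ≤ 4 := by
    rcases h with ⟨harg, him⟩ | ⟨hnorm, -⟩
    · have hsin : 99 / 100 ≤ Real.sin θ := by
        have := Real.cos_nonpos_of_pi_div_two_le_of_le hθ (by linarith)
        nlinarith [Real.sin_sq_add_cos_sq θ,
          Real.sin_nonneg_of_nonneg_of_le_pi (by linarith [Real.pi_pos]) hθπ]
      rw [abs_im_eq_norm_mul_sin_abs_arg, harg] at him
      nlinarith [norm_nonneg w]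
    · linarith
  refine ⟨hnorm, ?_, ?_⟩
  · rw [re_eq_norm_mul_cos_abs_arg]
    nlinarith [norm_nonneg w]
  · rcases h with ⟨-, him⟩ | ⟨hnorm, -⟩
    · exact him
    · linarith [abs_im_le_norm w, Real.pi_gt_three]

lemma arccos_neg_one_eighth_mem_Ioo : Real.arccos (-(1 / 8)) ∈ Ioo (Real.pi / 2) Real.pi := by
  refine ⟨?_, Real.arccos_lt_pi.2 (by norm_num)⟩
  rw [Real.arccos_neg]
  linarith [Real.arccos_lt_pi_div_two.2 (show (0 : ℝ) < 1 / 8 by norm_num)]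

theorem bdf3_symbol_two_sided_bound :
    ∃ θ₀ ∈ Ioo (Real.pi / 2) Real.pi, ∀ θ ∈ Ioo (Real.pi / 2) θ₀,
      ∃ c₁ > (0 : ℝ), ∃ c₂ > (0 : ℝ),
        ∀ τ : ℝ, 0 < τ → ∀ z ∈ Dset τ θ,
          c₁ * ‖z‖ ≤ ‖bdf3 τ (Complex.exp (-z * τ))‖ ∧
          ‖bdf3 τ (Complex.exp (-z * τ))‖ ≤ c₂ * ‖z‖ := by
  have hθ₀ := arccos_neg_one_eighth_mem_Ioo
  refine ⟨_, hθ₀, fun θ hθ => ?_⟩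
  have hθπ : θ ≤ Real.pi := (hθ.2.trans hθ₀.2).le
  have hcos : -(1 / 8) ≤ Real.cos θ := by
    have := Real.cos_le_cos_of_nonneg_of_le_pi (by linarith [hθ.1, Real.pi_pos])
      (Real.arccos_le_pi _) hθ.2.le
    rwa [Real.cos_arccos (by norm_num) (by norm_num)] at this
  obtain ⟨c₁, hc₁, c₂, hc₂, hbound⟩ := isCompact_rescaledRegion.exists_pos_bounds_norm
    continuous_dslope_bdf3Exp.continuousOn fun w hw => dslope_bdf3Exp_ne_zero hw
  refine ⟨c₁, hc₁, c₂, hc₂, fun τ hτ z hz => ?_⟩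
  have hw := mem_rescaledRegion_of_mem_Dset_one hθ.1.le hθπ hcos (mul_ofReal_mem_Dset_one hτ hz)
  rw [norm_bdf3_exp_neg_mul hτ]
  exact ⟨mul_le_mul_of_nonneg_right (hbound _ hw).1 (norm_nonneg z),
    mul_le_mul_of_nonneg_right (hbound _ hw).2 (norm_nonneg z)⟩
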